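/- arXiv:1411.4848 — 4 statements merged into one kernel-verified Lean document; each statement's English description precedes it below -/
import Mathlib

section
/- Let ν > 2, y > 0 and z > 0 with z·y > 1. Then ∫_{z^{1/ν}}^∞ u/(1 + y u^ν) du = z^{2/ν − 1} / ((ν − 2) y) · ₂F₁(1, 1 − 2/ν; 2 − 2/ν; −1/(z y)), where ₂F₁ is the Gauss hypergeometric series (which converges here since |−1/(zy)| < 1). -/
/-!
For `u > z^(1/ν)` we have `y uᵛ > z y > 1`, so the integrand expands as the geometric series
`u / (1 + y uᵛ) = ∑ (-1)ⁿ y⁻⁽ⁿ⁺¹⁾ u^(1 - ν(n+1))`. Its `n`-th term integrates to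
`z^(2/ν - n - 1) / (y^(n+1) (ν(n+1) - 2))`; these integrals are dominated by a geometric series of
ratio `1/(zy)`, which justifies termwise integration. With `b = 1 - 2/ν` the coefficients
`(1)ₙ (b)ₙ / ((b+1)ₙ n!)` of the ₂F₁ series telescope to `b / (b + n) = (ν - 2) / (ν(n+1) - 2)`,
which matches the integrals term by term.
-/

open MeasureTheory Real

/-- The Gauss hypergeometric series ₂F₁(a,b;c;w). -/
noncomputable def hyp2F1 (a b c w : ℝ) : ℝ :=
  ∑' n : ℕ, ((ascPochhammer ℝ n).eval a * (ascPochhammer ℝ n).eval b /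
    (ascPochhammer ℝ n).eval c) * w ^ n / (n.factorial : ℝ)

open Set

theorem ascPochhammer_eval_mul_add_one {S : Type*} [CommSemiring S] (b : S) (n : ℕ) :
    b * (ascPochhammer S n).eval (b + 1) = (ascPochhammer S n).eval b * (b + n) := by
  simpa [Polynomial.eval_comp] using congrArg (Polynomial.eval b)
    ((ascPochhammer_succ_left S n).symm.trans (ascPochhammer_succ_right S n))

theorem hyp2F1_one_add_one {b : ℝ} (hb : ∀ k : ℕ, b + k ≠ 0) (w : ℝ) :
    hyp2F1 1 b (b + 1) w = ∑' n : ℕ, b / (b + n) * w ^ n := by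
  refine tsum_congr fun n => ?_
  have hP : (ascPochhammer ℝ n).eval (b + 1) ≠ 0 := by
    rw [Ne, ascPochhammer_eval_eq_zero_iff]
    rintro ⟨k, -, hk⟩
    exact hb (k + 1) (by push_cast; linarith)
  have hratio :
      (ascPochhammer ℝ n).eval b / (ascPochhammer ℝ n).eval (b + 1) = b / (b + n) := by
    rw [div_eq_div_iff hP (hb n)]
    linear_combination -ascPochhammer_eval_mul_add_one b n
  rw [ascPochhammer_eval_one, mul_div_assoc (n.factorial : ℝ), hratio]
  field_simp

theorem hasSum_inv_one_add {K : Type*} [NormedField K] [CompleteSpace K] {s : K}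
    (hs : 1 < ‖s‖) :
    HasSum (fun n : ℕ => (-1) ^ n / s ^ (n + 1)) (1 + s)⁻¹ := by
  have hs0 : s ≠ 0 := norm_pos_iff.1 (one_pos.trans hs)
  have hs1 : 1 + s ≠ 0 := fun h => by
    rw [show s = -1 by linear_combination h] at hs; simp at hs
  have hgeom := (hasSum_geometric_of_norm_lt_one (ξ := -s⁻¹)
    (by simpa using inv_lt_one_of_one_lt₀ hs)).mul_left s⁻¹
  rw [show s⁻¹ * (1 - -s⁻¹)⁻¹ = (1 + s)⁻¹ by
    rw [sub_neg_eq_add, ← mul_inv, mul_add, mul_one, mul_inv_cancel₀ hs0, add_comm]] at hgeom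
  refine hgeom.congr_fun fun n => ?_
  rw [neg_pow s⁻¹, inv_pow, pow_succ', div_eq_mul_inv, mul_inv]
  ring

theorem hasSum_div_one_add_mul_rpow {ν y u : ℝ} (hu : 0 < u) (h : 1 < y * u ^ ν) :
    HasSum (fun n : ℕ => (-1) ^ n / y ^ (n + 1) * u ^ (1 - ν * (n + 1)))
      (u / (1 + y * u ^ ν)) := by
  have hs : 1 < ‖y * u ^ ν‖ := by rwa [norm_of_nonneg (by linarith)]
  rw [div_eq_mul_inv]
  refine ((hasSum_inv_one_add hs).mul_left u).congr_fun fun n => ?_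
  rw [rpow_sub hu, rpow_one, rpow_mul hu.le, mul_pow, ← rpow_natCast (u ^ ν)]
  push_cast
  field_simp

theorem one_lt_mul_rpow_of_rpow_one_div_lt {ν y z u : ℝ} (hν : 0 < ν) (hy : 0 < y) (hz : 0 < z)
    (hzy : 1 < z * y) (hu : z ^ (1 / ν) < u) : 1 < y * u ^ ν := by
  rw [one_div, rpow_inv_lt_iff_of_pos hz.le ((rpow_pos_of_pos hz _).le.trans hu.le) hν] at hu
  nlinarith

theorem integral_Ioi_root_rpow_one_sub_mul {ν z q : ℝ} (hν : ν ≠ 0) (hz : 0 < z)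
    (hq : 2 < ν * q) :
    ∫ u in Ioi (z ^ (1 / ν)), u ^ (1 - ν * q) = z ^ (2 / ν - q) / (ν * q - 2) := by
  rw [integral_Ioi_rpow_of_lt (by linarith) (rpow_pos_of_pos hz _), ← rpow_mul hz.le,
    show 1 - ν * q + 1 = -(ν * q - 2) by ring, div_neg, neg_div, neg_neg]
  congr 2
  field_simp
  ring

theorem integral_norm_const_mul_of_nonneg {α : Type*} [MeasurableSpace α] {μ : Measure α}
    (c : ℝ) {f : α → ℝ} (hf : 0 ≤ᵐ[μ] f) :
    ∫ x, ‖c * f x‖ ∂μ = ‖∫ x, c * f x ∂μ‖ := by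
  simp_rw [norm_mul, integral_const_mul]
  rw [norm_mul, integral_congr_ae (hf.mono fun x hx => norm_of_nonneg hx),
    norm_of_nonneg (integral_nonneg_of_ae hf)]

theorem summable_norm_div_add_mul_pow {b w : ℝ} (hb : 0 < b) (hw : |w| < 1) :
    Summable fun n : ℕ => ‖b / (b + n) * w ^ n‖ := by
  refine Summable.of_nonneg_of_le (fun n => norm_nonneg _) (fun n => ?_)
    (summable_geometric_of_lt_one (abs_nonneg w) hw)
  rw [norm_mul, norm_pow, norm_eq_abs, norm_eq_abs]
  have : |b / (b + n)| ≤ 1 := by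
    rw [abs_of_pos (by positivity), div_le_one (by positivity)]; simp
  exact mul_le_of_le_one_left (by positivity) this

theorem integral_Ioi_expansion_term {ν y z : ℝ} (hν : 2 < ν) (hy : y ≠ 0) (hz : 0 < z)
    (n : ℕ) :
    ∫ u in Ioi (z ^ (1 / ν)), (-1) ^ n / y ^ (n + 1) * u ^ (1 - ν * (n + 1))
      = z ^ (2 / ν - 1) / ((ν - 2) * y) *
          ((1 - 2 / ν) / (1 - 2 / ν + n) * (-1 / (z * y)) ^ n) := by
  have hq : 2 < ν * (n + 1) := by nlinarith [n.cast_nonneg (α := ℝ)]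
  have hν0 : ν ≠ 0 := by positivity
  rw [integral_const_mul, integral_Ioi_root_rpow_one_sub_mul hν0 hz hq,
    show 2 / ν - (n + 1) = 2 / ν - 1 - n by ring, rpow_sub hz, rpow_natCast,
    show 1 - 2 / ν + n = (ν * (n + 1) - 2) / ν by field_simp; ring, div_pow, mul_pow]
  have : ν * (n + 1) - 2 ≠ 0 := by linarith
  have : ν - 2 ≠ 0 := by linarith
  field_simp
  ring

/-- tail integral of u/(1 + y u^ν) in closed hypergeometric form. -/
theorem integral_tail_eq_hyp2F1 (ν y z : ℝ) (hν : 2 < ν) (hy : 0 < y) (hz : 0 < z)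
    (hzy : 1 < z * y) :
    ∫ u in Set.Ioi (z ^ (1 / ν)), u / (1 + y * u ^ ν)
      = z ^ (2 / ν - 1) / ((ν - 2) * y) *
        hyp2F1 1 (1 - 2 / ν) (2 - 2 / ν) (-1 / (z * y)) := by
  have hb : 0 < 1 - 2 / ν := by
    have : 2 / ν < 1 := (div_lt_one (by linarith)).2 hν
    linarith
  have hw : |-1 / (z * y)| < 1 := by
    rwa [abs_div, abs_neg, abs_one, abs_of_pos (by positivity), div_lt_one (by positivity)]
  set A := z ^ (1 / ν)
  set F : ℕ → ℝ → ℝ := fun n u => (-1) ^ n / y ^ (n + 1) * u ^ (1 - ν * (n + 1))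
  set K := z ^ (2 / ν - 1) / ((ν - 2) * y)
  have hexpand : ∀ u ∈ Ioi A, ∑' n, F n u = u / (1 + y * u ^ ν) := fun u hu =>
    (hasSum_div_one_add_mul_rpow ((rpow_pos_of_pos hz _).trans hu)
      (one_lt_mul_rpow_of_rpow_one_div_lt (by linarith) hy hz hzy hu)).tsum_eq
  have hint (n : ℕ) : IntegrableOn (F n) (Ioi A) :=
    (integrableOn_Ioi_rpow_of_lt (by nlinarith [n.cast_nonneg (α := ℝ)])
      (rpow_pos_of_pos hz _)).const_mul _
  have hnorm (n : ℕ) : ∫ u in Ioi A, ‖F n u‖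
      = ‖K‖ * ‖(1 - 2 / ν) / (1 - 2 / ν + n) * (-1 / (z * y)) ^ n‖ := by
    rw [integral_norm_const_mul_of_nonneg _ (ae_restrict_of_forall_mem measurableSet_Ioi
      fun u hu => rpow_nonneg ((rpow_pos_of_pos hz _).trans hu).le _),
      integral_Ioi_expansion_term hν hy.ne' hz n, norm_mul]
  calc ∫ u in Ioi A, u / (1 + y * u ^ ν)
      = ∫ u in Ioi A, ∑' n, F n u := (setIntegral_congr_fun measurableSet_Ioi hexpand).symm
    _ = ∑' n, ∫ u in Ioi A, F n u := (integral_tsum_of_summable_integral_norm hint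
        (by simp_rw [hnorm]; exact (summable_norm_div_add_mul_pow hb hw).mul_left _)).symm
    _ = ∑' n : ℕ, K * ((1 - 2 / ν) / (1 - 2 / ν + n) * (-1 / (z * y)) ^ n) :=
        tsum_congr (integral_Ioi_expansion_term hν hy.ne' hz)
    _ = K * hyp2F1 1 (1 - 2 / ν) (2 - 2 / ν) (-1 / (z * y)) := by
        rw [tsum_mul_left, show (2 : ℝ) - 2 / ν = 1 - 2 / ν + 1 by ring,
          hyp2F1_one_add_one fun k => by positivity]
end

section
/- Let α > 2, c > 0 and D > 0. Then 2·∫_D^∞ x·(1 − exp(−c x^{−α})) dx = −D² + c^{2/α} Γ(1 − 2/α) + (2/α)·c^{2/α}·Γ(−2/α, c/D^α), where Γ denotes the real Gamma function and Γ(a,u) the real upper incomplete gamma function. -/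
open MeasureTheory Real

/-- The real upper incomplete gamma function Γ(a,u) = ∫_u^∞ t^{a−1} e^{−t} dt. -/
noncomputable def uGamma (a u : ℝ) : ℝ := ∫ t in Set.Ioi u, t ^ (a - 1) * Real.exp (-t)

/-!
Put s = −2/α ∈ (−1, 0). The function x²/2 − (c^{2/α}/α) Γ(s, c x^{−α}) is a primitive of
x (1 − e^{−c x^{−α}}) on (0, ∞): by the chain rule and c^{2/α} (c x^{−α})^s = x², the derivative
of the incomplete-gamma term is x e^{−c x^{−α}}. At u = c x^{−α} the primitive equals
−(c^{2/α}/α) (u^s/s + Γ(s, u)), and the recurrence Γ(s + 1, u) = u^s e^{−u} + s Γ(s, u) cancels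
the singular term u^s/s, so the primitive tends to −(c^{2/α}/α) Γ(s + 1)/s as x → ∞.
-/

open Set Filter Topology

lemma integrableOn_rpow_mul_exp_neg_Ioi (r : ℝ) {t : ℝ} (ht : 0 < t) :
    IntegrableOn (fun y => y ^ r * exp (-y)) (Ioi t) := by
  have hcont : ContinuousOn (fun y : ℝ => y ^ r * exp (-y)) (Ici t) :=
    (continuousOn_id.rpow_const fun y hy => Or.inl (ht.trans_le hy).ne').mul
      continuous_id.neg.rexp.continuousOn
  refine integrable_of_isBigO_exp_neg one_half_pos hcont ?_
  simpa only [mul_comm] using (Gamma_integrand_isLittleO r).isBigO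

lemma uGamma_add_one (s : ℝ) {t : ℝ} (ht : 0 < t) :
    uGamma (s + 1) t = t ^ s * exp (-t) + s * uGamma s t := by
  have hderiv : ∀ y ∈ Ici t, HasDerivAt (fun y => -(y ^ s * exp (-y)))
      (y ^ (s + 1 - 1) * exp (-y) - s * (y ^ (s - 1) * exp (-y))) y := by
    intro y hy
    have hy0 : y ≠ 0 := (ht.trans_le hy).ne'
    refine (((hasDerivAt_rpow_const (Or.inl hy0)).mul (hasDerivAt_neg y).exp).neg).congr_deriv ?_
    rw [add_sub_cancel_right]
    ring
  have hdecay : Tendsto (fun y => -(y ^ s * exp (-y))) atTop (𝓝 0) := by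
    simpa using (tendsto_rpow_mul_exp_neg_mul_atTop_nhds_zero s 1 one_pos).neg
  have hint := integrableOn_rpow_mul_exp_neg_Ioi (s + 1 - 1) ht
  have hint' := (integrableOn_rpow_mul_exp_neg_Ioi (s - 1) ht).const_mul s
  have hftc := integral_Ioi_of_hasDerivAt_of_tendsto' hderiv (hint.sub hint') hdecay
  rw [integral_sub hint hint', integral_const_mul] at hftc
  unfold uGamma
  linarith

lemma uGamma_eq_integral_Ioc_add {a x b : ℝ} (hx : 0 < x) (hxb : x ≤ b) :
    uGamma a x = (∫ y in Ioc x b, y ^ (a - 1) * exp (-y)) + uGamma a b := by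
  have hint := integrableOn_rpow_mul_exp_neg_Ioi (a - 1) hx
  rw [uGamma, uGamma, ← setIntegral_union (Ioc_disjoint_Ioi le_rfl) measurableSet_Ioi
    (hint.mono_set Ioc_subset_Ioi_self) (hint.mono_set (Ioi_subset_Ioi hxb)),
    Ioc_union_Ioi_eq_Ioi hxb]

lemma hasDerivAt_uGamma (a : ℝ) {t : ℝ} (ht : 0 < t) :
    HasDerivAt (uGamma a) (-(t ^ (a - 1) * exp (-t))) t := by
  have hcont : ContinuousOn (fun y : ℝ => y ^ (a - 1) * exp (-y)) (Ioi 0) :=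
    (continuousOn_id.rpow_const fun y hy => Or.inl (ne_of_gt hy)).mul
      continuous_id.neg.rexp.continuousOn
  have hii : IntervalIntegrable (fun y : ℝ => y ^ (a - 1) * exp (-y)) volume t (t + 1) := by
    rw [intervalIntegrable_iff_integrableOn_Ioc_of_le (by linarith)]
    exact (integrableOn_rpow_mul_exp_neg_Ioi (a - 1) (half_pos ht)).mono_set
      fun y hy => (half_lt_self ht).trans hy.1
  have hprim : HasDerivAt (fun x => ∫ y in x..t + 1, y ^ (a - 1) * exp (-y))
      (-(t ^ (a - 1) * exp (-t))) t :=
    intervalIntegral.integral_hasDerivAt_left hii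
      (hcont.stronglyMeasurableAtFilter isOpen_Ioi t ht) (hcont.continuousAt (Ioi_mem_nhds ht))
  refine (hprim.add_const (uGamma a (t + 1))).congr_of_eventuallyEq ?_
  filter_upwards [Ioo_mem_nhds ht (lt_add_one t)] with x hx
  rw [uGamma_eq_integral_Ioc_add hx.1 hx.2.le, intervalIntegral.integral_of_le hx.2.le]

lemma tendsto_uGamma_nhdsGT_zero {a : ℝ} (ha : 0 < a) :
    Tendsto (uGamma a) (𝓝[>] 0) (𝓝 (Gamma a)) := by
  set f : ℝ → ℝ := fun y => y ^ (a - 1) * exp (-y)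
  have hf : IntegrableOn f (Ioi 0) :=
    (GammaIntegral_convergent ha).congr_fun (fun y _ => mul_comm _ _) measurableSet_Ioi
  have hGamma : Gamma a = ∫ y in Ioi 0, f y := by
    rw [Gamma_eq_integral ha]
    exact setIntegral_congr_fun measurableSet_Ioi fun y _ => mul_comm _ _
  have hindicator : ∀ t ∈ Ioi (0 : ℝ), uGamma a t = ∫ y in Ioi 0, (Ioi t).indicator f y := by
    intro t ht
    rw [setIntegral_indicator measurableSet_Ioi, Ioi_inter_Ioi, sup_eq_right.2 (le_of_lt ht)]
    rfl
  rw [hGamma]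
  refine (tendsto_integral_filter_of_dominated_convergence (fun y => ‖f y‖) ?_ ?_ hf.norm ?_).congr'
    (eventually_nhdsWithin_of_forall fun t ht => (hindicator t ht).symm)
  · exact Eventually.of_forall fun t =>
      (hf.indicator measurableSet_Ioi).aestronglyMeasurable
  · exact Eventually.of_forall fun t => Eventually.of_forall fun y =>
      norm_indicator_le_norm_self f y
  · filter_upwards [ae_restrict_mem measurableSet_Ioi] with y hy
    refine tendsto_const_nhds.congr' ?_
    filter_upwards [Ioo_mem_nhdsGT (show (0 : ℝ) < y from hy)] with t ht
    exact (indicator_of_mem ht.2 f).symm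

lemma tendsto_rpow_div_add_uGamma_nhdsGT_zero {s : ℝ} (hs : -1 < s) (hs0 : s ≠ 0) :
    Tendsto (fun t => t ^ s / s + uGamma s t) (𝓝[>] 0) (𝓝 (Gamma (s + 1) / s)) := by
  have hsmall : Tendsto (fun t => t ^ s * (1 - exp (-t))) (𝓝[>] 0) (𝓝 0) := by
    have hpow : Tendsto (fun t : ℝ => t ^ (s + 1)) (𝓝[>] 0) (𝓝 0) := by
      simpa [zero_rpow (by linarith : s + 1 ≠ 0)] using
        ((continuousAt_rpow_const 0 (s + 1) (Or.inr (by linarith))).tendsto).mono_left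
          nhdsWithin_le_nhds
    refine tendsto_of_tendsto_of_tendsto_of_le_of_le' tendsto_const_nhds hpow ?_ ?_ <;>
      filter_upwards [self_mem_nhdsWithin] with t (ht : 0 < t)
    · have : exp (-t) ≤ 1 := exp_le_one_iff.2 (by linarith)
      exact mul_nonneg (by positivity) (by linarith)
    · rw [rpow_add_one ht.ne']
      gcongr
      linarith [add_one_le_exp (-t)]
  have hlim := (hsmall.add (tendsto_uGamma_nhdsGT_zero (by linarith : 0 < s + 1))).div_const s
  rw [zero_add] at hlim
  refine hlim.congr' (eventually_nhdsWithin_of_forall fun t (ht : 0 < t) => ?_)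
  rw [uGamma_add_one s ht]
  field_simp
  ring

lemma rpow_two_div_mul_rpow_neg_two_div {α c x : ℝ} (hα : α ≠ 0) (hc : 0 < c) (hx : 0 < x) :
    c ^ (2 / α) * (c * x ^ (-α)) ^ (-(2 / α)) = x ^ 2 := by
  rw [mul_rpow hc.le (by positivity), ← rpow_mul hx.le, ← mul_assoc, ← rpow_add hc,
    add_neg_cancel, rpow_zero, one_mul, neg_mul_neg, mul_div_cancel₀ _ hα]
  norm_cast

noncomputable def tailPrimitive (α c x : ℝ) : ℝ :=
  x ^ 2 / 2 - c ^ (2 / α) / α * uGamma (-(2 / α)) (c * x ^ (-α))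

lemma hasDerivAt_tailPrimitive {α c x : ℝ} (hα : α ≠ 0) (hc : 0 < c) (hx : 0 < x) :
    HasDerivAt (tailPrimitive α c) (x * (1 - exp (-(c * x ^ (-α))))) x := by
  have hu : 0 < c * x ^ (-α) := by positivity
  have hinner : HasDerivAt (fun x => c * x ^ (-α)) (c * (-α * x ^ (-α - 1))) x :=
    (hasDerivAt_rpow_const (Or.inl hx.ne')).const_mul c
  have hsq : HasDerivAt (fun x : ℝ => x ^ 2 / 2) x x := by
    simpa using (hasDerivAt_pow 2 x).div_const 2
  refine (hsq.sub (((hasDerivAt_uGamma _ hu).comp x hinner).const_mul _)).congr_deriv ?_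
  have hkey : c ^ (2 / α) / α * ((c * x ^ (-α)) ^ (-(2 / α) - 1) * (c * (α * x ^ (-α - 1))))
      = x := by
    rw [rpow_sub_one hu.ne', rpow_sub_one hx.ne']
    field_simp
    linear_combination rpow_two_div_mul_rpow_neg_two_div hα hc hx
  linear_combination -exp (-(c * x ^ (-α))) * hkey

lemma tendsto_tailPrimitive_atTop {α c : ℝ} (hα : 2 < α) (hc : 0 < c) :
    Tendsto (tailPrimitive α c) atTop
      (𝓝 (-(c ^ (2 / α) / α) * (Gamma (1 - 2 / α) / (-(2 / α))))) := by
  have hα0 : 0 < α := by linarith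
  have hu : Tendsto (fun x => c * x ^ (-α)) atTop (𝓝[>] 0) := by
    refine tendsto_nhdsWithin_iff.2 ⟨?_, ?_⟩
    · simpa using (tendsto_rpow_neg_atTop hα0).const_mul c
    · filter_upwards [eventually_gt_atTop 0] with x hx
      exact mul_pos hc (rpow_pos_of_pos hx _)
  have hs : -1 < -(2 / α) := by
    rw [neg_lt_neg_iff, div_lt_one hα0]
    exact hα
  have hlim := ((tendsto_rpow_div_add_uGamma_nhdsGT_zero hs
    (neg_ne_zero.2 (by positivity))).comp hu).const_mul (-(c ^ (2 / α) / α))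
  rw [neg_add_eq_sub] at hlim
  refine hlim.congr' ?_
  filter_upwards [eventually_gt_atTop 0] with x hx
  have hpow := rpow_two_div_mul_rpow_neg_two_div hα0.ne' hc hx
  simp only [Function.comp_apply, tailPrimitive]
  field_simp
  linear_combination α * hpow

lemma integrableOn_mul_one_sub_exp_neg_mul_rpow {α c D : ℝ} (hα : 2 < α) (hc : 0 ≤ c)
    (hD : 0 < D) : IntegrableOn (fun x => x * (1 - exp (-(c * x ^ (-α))))) (Ioi D) := by
  have hmajorant : IntegrableOn (fun x => c * x ^ (1 - α)) (Ioi D) :=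
    (integrableOn_Ioi_rpow_of_lt (by linarith) hD).const_mul c
  refine hmajorant.mono' ?_ ?_
  · refine (ContinuousOn.mul continuousOn_id (continuousOn_const.sub
      (continuousOn_const.mul ?_).neg.rexp)).aestronglyMeasurable measurableSet_Ioi
    exact continuousOn_id.rpow_const fun x hx => Or.inl (hD.trans hx).ne'
  · filter_upwards [ae_restrict_mem measurableSet_Ioi] with x (hx : D < x)
    have hx0 : 0 < x := hD.trans hx
    have hu : 0 ≤ c * x ^ (-α) := by positivity
    have hexp : exp (-(c * x ^ (-α))) ≤ 1 := exp_le_one_iff.2 (by linarith)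
    rw [norm_of_nonneg (mul_nonneg hx0.le (by linarith)), sub_eq_add_neg 1 α, rpow_add hx0,
      rpow_one, mul_left_comm]
    gcongr
    linarith [add_one_le_exp (-(c * x ^ (-α)))]

/-- closed form of 2∫_D^∞ x(1 − exp(−c x^{−α})) dx. -/
theorem integral_tail_one_sub_exp (α c D : ℝ) (hα : 2 < α) (hc : 0 < c) (hD : 0 < D) :
    2 * ∫ x in Set.Ioi D, x * (1 - Real.exp (-(c * x ^ (-α))))
      = -D ^ 2 + c ^ (2 / α) * Real.Gamma (1 - 2 / α)
        + (2 / α) * c ^ (2 / α) * uGamma (-(2 / α)) (c / D ^ α) := by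
  have hα0 : 0 < α := by linarith
  rw [integral_Ioi_of_hasDerivAt_of_tendsto'
    (fun x hx => hasDerivAt_tailPrimitive hα0.ne' hc (hD.trans_le hx))
    (integrableOn_mul_one_sub_exp_neg_mul_rpow hα hc.le hD) (tendsto_tailPrimitive_atTop hα hc),
    tailPrimitive, rpow_neg hD.le, ← div_eq_mul_inv]
  field_simp
  ring
end

section
/- Let α > 2, s > 0, D > 0, and let P_u, P_b > 0 with P_u ≠ P_b. Then (1/(P_u − P_b)) · ∫₀^∞ (e^{−g/P_u} − e^{−g/P_b}) · ( 2·∫_D^∞ x·(1 − exp(−s g x^{−α})) dx ) dg = −D² + s^{2/α} · (2/(α (P_u − P_b))) · [ π·csc(2π/α)·(P_u^{2/α + 1} − P_b^{2/α + 1}) + I₁(2/α + 1, 1/P_u, −2/α, s/D^α) − I₁(2/α + 1, 1/P_b, −2/α, s/D^α) ], where I₁(x, y, z, ν) := ∫₀^∞ t^{x−1} e^{−y t} Γ(z, ν t) dt and Γ(a,u) is the real upper incomplete gamma function. (This is the exponent of the Laplace transform of the network interference from full-duplex cells with unequal access-point and user transmit powers.) -/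
open MeasureTheory Real

/-- I₁(x,y,z,ν) = ∫₀^∞ t^{x−1} e^{−yt} Γ(z, νt) dt. -/
noncomputable def I1 (x y z ν : ℝ) : ℝ :=
  ∫ t in Set.Ioi (0 : ℝ), t ^ (x - 1) * Real.exp (-(y * t)) * uGamma z (ν * t)

/-!
Treat each power `P` separately: the left side is a difference quotient of
`L(P) = ∫₀^∞ e^{-g/P} · 2∫_D^∞ x (1 - e^{-s g x^{-α}}) dx dg`.
By Tonelli and `∫₀^∞ e^{-g/P} (1 - e^{-cg}) dg = P - (1/P + c)⁻¹`,
`L(P) = 2∫_D^∞ G` with `G x = x (P - (1/P + s x^{-α})⁻¹) = s P² x / (sP + x^α)`.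
Split `∫_D^∞ = ∫_0^∞ - ∫_0^D`. The integral over `(0, ∞)` is the Beta-type integral
`∫₀^∞ x^q / (c + x^p) dx`, computed by writing `1/(c + x^p)` as a Laplace integral, swapping
the order, and using `Γ(r) Γ(1 - r) = π / sin (π r)`. On `(0, D)` the term `P x` gives `-P D²`;
the rest becomes `I₁` after writing `Γ(z, νt) = (νt)^z ∫_1^∞ w^{z-1} e^{-νtw} dw`,
integrating out `t`, and substituting `w = (D/x)^α`.
-/

open Set

theorem integral_exp_neg_mul_Ioi_zero {a : ℝ} (ha : 0 < a) :
    ∫ g in Ioi (0 : ℝ), exp (-a * g) = a⁻¹ := by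
  simpa using integral_exp_mul_Ioi (neg_lt_zero.mpr ha) 0

theorem integral_exp_neg_div_mul_one_sub_exp {P c : ℝ} (hP : 0 < P) (hc : 0 ≤ c) :
    ∫ g in Ioi (0 : ℝ), exp (-(g / P)) * (1 - exp (-(c * g))) = P - (P⁻¹ + c)⁻¹ := by
  have hP' : 0 < P⁻¹ := inv_pos.mpr hP
  have hPc : 0 < P⁻¹ + c := by positivity
  have split (g : ℝ) : exp (-(g / P)) * (1 - exp (-(c * g)))
      = exp (-P⁻¹ * g) - exp (-(P⁻¹ + c) * g) := by
    rw [mul_one_sub, ← exp_add]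
    congr 2 <;> ring
  simp_rw [split]
  rw [integral_sub (exp_neg_integrableOn_Ioi 0 hP') (exp_neg_integrableOn_Ioi 0 hPc),
    integral_exp_neg_mul_Ioi_zero hP', integral_exp_neg_mul_Ioi_zero hPc, inv_inv]

section RpowDivAddRpow

variable {p q c : ℝ}

theorem integrable_exp_mul_rpow_mul_exp_mul_rpow (hq : -1 < q) (hqp : q + 1 < p) (hc : 0 < c) :
    Integrable (fun z : ℝ × ℝ => exp (-c * z.1) * (z.2 ^ q * exp (-z.1 * z.2 ^ p)))
      ((volume.restrict (Ioi 0)).prod (volume.restrict (Ioi 0))) := by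
  have hp : 0 < p := by linarith
  have hr : -1 < -(q + 1) / p := by rw [neg_div, neg_lt_neg_iff, div_lt_one hp]; exact hqp
  rw [integrable_prod_iff (Measurable.aestronglyMeasurable (by fun_prop))]
  refine ⟨?_, ?_⟩
  · filter_upwards [ae_restrict_mem measurableSet_Ioi] with t ht
    exact (integrableOn_rpow_mul_exp_neg_mul_rpow hq hp ht).const_mul _
  · refine IntegrableOn.congr_fun
      ((integrableOn_rpow_mul_exp_neg_mul_rpow hr one_pos hc).const_mul
        (1 / p * Gamma ((q + 1) / p)))
      (fun t (ht : 0 < t) => ?_) measurableSet_Ioi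
    have hnorm : ∫ x in Ioi (0 : ℝ), ‖exp (-c * t) * (x ^ q * exp (-t * x ^ p))‖
        = ∫ x in Ioi (0 : ℝ), exp (-c * t) * (x ^ q * exp (-t * x ^ p)) :=
      setIntegral_congr_fun measurableSet_Ioi fun x (hx : 0 < x) => norm_of_nonneg (by positivity)
    rw [hnorm, integral_const_mul, integral_rpow_mul_exp_neg_mul_rpow hp hq ht, rpow_one]
    ring

theorem rpow_div_add_rpow_eq_integral {x : ℝ} (hx : 0 < x) (hc : 0 < c) :
    x ^ q / (c + x ^ p) = ∫ t in Ioi (0 : ℝ), exp (-c * t) * (x ^ q * exp (-t * x ^ p)) := by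
  have hcx : 0 < c + x ^ p := by positivity
  have merge (t : ℝ) :
      exp (-c * t) * (x ^ q * exp (-t * x ^ p)) = x ^ q * exp (-(c + x ^ p) * t) := by
    rw [mul_left_comm, ← exp_add]; ring_nf
  simp_rw [merge]
  rw [integral_const_mul, integral_exp_neg_mul_Ioi_zero hcx, div_eq_mul_inv]

theorem integrableOn_rpow_div_add_rpow (hq : -1 < q) (hqp : q + 1 < p) (hc : 0 < c) :
    IntegrableOn (fun x : ℝ => x ^ q / (c + x ^ p)) (Ioi 0) :=
  IntegrableOn.congr_fun (integrable_exp_mul_rpow_mul_exp_mul_rpow hq hqp hc).integral_prod_right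
    (fun x (hx : 0 < x) => (rpow_div_add_rpow_eq_integral hx hc).symm)
    measurableSet_Ioi

theorem integral_rpow_div_add_rpow (hq : -1 < q) (hqp : q + 1 < p) (hc : 0 < c) :
    ∫ x in Ioi (0 : ℝ), x ^ q / (c + x ^ p)
      = π / (p * sin (π * ((q + 1) / p))) * c ^ ((q + 1) / p - 1) := by
  have hp : 0 < p := by linarith
  set r := (q + 1) / p
  have hr : -1 < -r := by rw [neg_lt_neg_iff, div_lt_one hp]; exact hqp
  calc ∫ x in Ioi (0 : ℝ), x ^ q / (c + x ^ p)
      = ∫ x in Ioi (0 : ℝ), ∫ t in Ioi (0 : ℝ), exp (-c * t) * (x ^ q * exp (-t * x ^ p)) :=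
        setIntegral_congr_fun measurableSet_Ioi fun x hx => rpow_div_add_rpow_eq_integral hx hc
    _ = ∫ t in Ioi (0 : ℝ), ∫ x in Ioi (0 : ℝ), exp (-c * t) * (x ^ q * exp (-t * x ^ p)) :=
        (integral_integral_swap (integrable_exp_mul_rpow_mul_exp_mul_rpow hq hqp hc)).symm
    _ = ∫ t in Ioi (0 : ℝ), (1 / p * Gamma r) * (t ^ (-r) * exp (-c * t ^ (1 : ℝ))) := by
        refine setIntegral_congr_fun measurableSet_Ioi fun t (ht : 0 < t) => ?_
        rw [integral_const_mul, integral_rpow_mul_exp_neg_mul_rpow hp hq ht, rpow_one, neg_div]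
        ring
    _ = Gamma r * Gamma (1 - r) / p * c ^ (r - 1) := by
        rw [integral_const_mul, integral_rpow_mul_exp_neg_mul_rpow one_pos hr hc]
        ring_nf
    _ = π / (p * sin (π * r)) * c ^ (r - 1) := by
        rw [Gamma_mul_Gamma_one_sub, div_div, mul_comm p]

end RpowDivAddRpow

noncomputable def interferenceExponent (α s D g : ℝ) : ℝ :=
  2 * ∫ x in Ioi D, x * (1 - exp (-(s * g * x ^ (-α))))

section InterferenceExponent

variable {α s D P : ℝ}

theorem integrable_exp_neg_div_mul_one_sub_exp_rpow (hα : 2 < α) (hs : 0 ≤ s) (hD : 0 < D)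
    (hP : 0 < P) :
    Integrable
      (fun z : ℝ × ℝ => exp (-(z.1 / P)) * (z.2 * (1 - exp (-(s * z.1 * z.2 ^ (-α))))))
      ((volume.restrict (Ioi 0)).prod (volume.restrict (Ioi D))) := by
  have hdom : Integrable
      (fun z : ℝ × ℝ =>
        s * (z.1 ^ (1 : ℝ) * exp (-P⁻¹ * z.1 ^ (1 : ℝ))) * z.2 ^ (1 - α))
      ((volume.restrict (Ioi 0)).prod (volume.restrict (Ioi D))) :=
    Integrable.mul_prod
      ((integrableOn_rpow_mul_exp_neg_mul_rpow (by norm_num) one_pos (inv_pos.mpr hP)).const_mul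
        s)
      (integrableOn_Ioi_rpow_of_lt (by linarith) hD)
  refine hdom.mono (Measurable.aestronglyMeasurable (by fun_prop)) ?_
  rw [Measure.prod_restrict, ae_restrict_iff' (measurableSet_Ioi.prod measurableSet_Ioi)]
  refine Filter.Eventually.of_forall fun ⟨g, x⟩ ⟨(hg : 0 < g), (hx : D < x)⟩ => ?_
  have hx0 : 0 < x := hD.trans hx
  have hexp : exp (-(s * g * x ^ (-α))) ≤ 1 :=
    exp_le_one_iff.mpr (neg_nonpos.mpr (by positivity))
  have hlin : 1 - exp (-(s * g * x ^ (-α))) ≤ s * g * x ^ (-α) := by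
    linarith [add_one_le_exp (-(s * g * x ^ (-α)))]
  dsimp only
  rw [norm_of_nonneg (mul_nonneg (exp_pos _).le (mul_nonneg hx0.le (sub_nonneg.mpr hexp))),
    norm_of_nonneg (by positivity), rpow_one, rpow_sub hx0, rpow_one, div_eq_mul_inv x,
    ← rpow_neg hx0.le, show -P⁻¹ * g = -(g / P) by ring]
  calc exp (-(g / P)) * (x * (1 - exp (-(s * g * x ^ (-α)))))
      ≤ exp (-(g / P)) * (x * (s * g * x ^ (-α))) := by gcongr
    _ = s * (g * exp (-(g / P))) * (x * x ^ (-α)) := by ring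

theorem exp_neg_div_mul_interferenceExponent_eq (g : ℝ) :
    exp (-(g / P)) * interferenceExponent α s D g
      = 2 * ∫ x in Ioi D, exp (-(g / P)) * (x * (1 - exp (-(s * g * x ^ (-α))))) := by
  rw [interferenceExponent, integral_const_mul]
  ring

theorem integrableOn_exp_neg_div_mul_interferenceExponent (hα : 2 < α) (hs : 0 ≤ s) (hD : 0 < D)
    (hP : 0 < P) :
    IntegrableOn (fun g => exp (-(g / P)) * interferenceExponent α s D g) (Ioi 0) := by
  simp_rw [exp_neg_div_mul_interferenceExponent_eq]
  exact ((integrable_exp_neg_div_mul_one_sub_exp_rpow hα hs hD hP).integral_prod_left).const_mul 2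

theorem integral_exp_neg_div_mul_interferenceExponent_eq_integral (hα : 2 < α) (hs : 0 ≤ s)
    (hD : 0 < D) (hP : 0 < P) :
    ∫ g in Ioi (0 : ℝ), exp (-(g / P)) * interferenceExponent α s D g
      = 2 * ∫ x in Ioi D, x * (P - (P⁻¹ + s * x ^ (-α))⁻¹) := by
  simp_rw [exp_neg_div_mul_interferenceExponent_eq]
  rw [integral_const_mul,
    integral_integral_swap (integrable_exp_neg_div_mul_one_sub_exp_rpow hα hs hD hP)]
  congr 1
  refine setIntegral_congr_fun measurableSet_Ioi fun x (hx : D < x) => ?_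
  have hc : 0 ≤ s * x ^ (-α) := by have := hD.trans hx; positivity
  have hpt (g : ℝ) : exp (-(g / P)) * (x * (1 - exp (-(s * g * x ^ (-α)))))
      = x * (exp (-(g / P)) * (1 - exp (-(s * x ^ (-α) * g)))) := by
    rw [mul_right_comm s g]; ring
  simp_rw [hpt]
  rw [integral_const_mul, integral_exp_neg_div_mul_one_sub_exp hP hc]

end InterferenceExponent

theorem uGamma_eq_rpow_mul_integral (z : ℝ) {u : ℝ} (hu : 0 < u) :
    uGamma z u = u ^ z * ∫ w in Ioi (1 : ℝ), w ^ (z - 1) * exp (-(u * w)) := by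
  have h := integral_comp_mul_left_Ioi (fun t => t ^ (z - 1) * exp (-t)) 1 hu
  rw [mul_one, smul_eq_mul] at h
  calc uGamma z u = u * ∫ w in Ioi (1 : ℝ), (u * w) ^ (z - 1) * exp (-(u * w)) := by
        rw [h, mul_inv_cancel_left₀ hu.ne', uGamma]
    _ = u * ∫ w in Ioi (1 : ℝ), u ^ (z - 1) * (w ^ (z - 1) * exp (-(u * w))) := by
        congr 1
        refine setIntegral_congr_fun measurableSet_Ioi fun w (hw : 1 < w) => ?_
        rw [mul_rpow hu.le (by linarith), mul_assoc]
    _ = u ^ z * ∫ w in Ioi (1 : ℝ), w ^ (z - 1) * exp (-(u * w)) := by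
        rw [integral_const_mul, ← mul_assoc, mul_comm u, ← rpow_add_one hu.ne', sub_add_cancel]

section I1

variable {x y z ν : ℝ}

theorem integrable_exp_mul_rpow_mul_exp_mul (hy : 0 < y) (hν : 0 ≤ ν) (hz : z < 0) :
    Integrable (fun p : ℝ × ℝ => exp (-y * p.1) * (p.2 ^ (z - 1) * exp (-(ν * p.1 * p.2))))
      ((volume.restrict (Ioi 0)).prod (volume.restrict (Ioi 1))) := by
  have hdom : Integrable (fun p : ℝ × ℝ => exp (-y * p.1) * p.2 ^ (z - 1))
      ((volume.restrict (Ioi 0)).prod (volume.restrict (Ioi 1))) :=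
    Integrable.mul_prod (exp_neg_integrableOn_Ioi 0 hy)
      (integrableOn_Ioi_rpow_of_lt (by linarith) one_pos)
  refine hdom.mono (Measurable.aestronglyMeasurable (by fun_prop)) ?_
  rw [Measure.prod_restrict, ae_restrict_iff' (measurableSet_Ioi.prod measurableSet_Ioi)]
  refine Filter.Eventually.of_forall fun ⟨t, w⟩ ⟨(ht : 0 < t), (hw : 1 < w)⟩ => ?_
  have hw0 : 0 < w := one_pos.trans hw
  have hexp : exp (-(ν * t * w)) ≤ 1 := exp_le_one_iff.mpr (neg_nonpos.mpr (by positivity))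
  dsimp only
  rw [norm_of_nonneg (by positivity), norm_of_nonneg (by positivity)]
  calc exp (-y * t) * (w ^ (z - 1) * exp (-(ν * t * w)))
      ≤ exp (-y * t) * (w ^ (z - 1) * 1) := by gcongr
    _ = exp (-y * t) * w ^ (z - 1) := by rw [mul_one]

theorem I1_eq_rpow_mul_integral (hxz : x + z = 1) (hy : 0 < y) (hν : 0 < ν) (hz : z < 0) :
    I1 x y z ν = ν ^ z * ∫ w in Ioi (1 : ℝ), w ^ (z - 1) * (y + ν * w)⁻¹ := by
  calc I1 x y z ν
      = ν ^ z * ∫ t in Ioi (0 : ℝ), ∫ w in Ioi (1 : ℝ),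
          exp (-y * t) * (w ^ (z - 1) * exp (-(ν * t * w))) := by
        rw [I1, ← integral_const_mul]
        refine setIntegral_congr_fun measurableSet_Ioi fun t (ht : 0 < t) => ?_
        have hpow : t ^ (x - 1) * t ^ z = 1 := by
          rw [← rpow_add ht, show x - 1 + z = 0 by linarith, rpow_zero]
        rw [uGamma_eq_rpow_mul_integral z (by positivity), mul_rpow hν.le ht.le,
          integral_const_mul, neg_mul]
        linear_combination (ν ^ z * exp (-(y * t)) *
          ∫ w in Ioi (1 : ℝ), w ^ (z - 1) * exp (-(ν * t * w))) * hpow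
    _ = ν ^ z * ∫ w in Ioi (1 : ℝ), ∫ t in Ioi (0 : ℝ),
          exp (-y * t) * (w ^ (z - 1) * exp (-(ν * t * w))) := by
        rw [integral_integral_swap (integrable_exp_mul_rpow_mul_exp_mul hy hν.le hz)]
    _ = ν ^ z * ∫ w in Ioi (1 : ℝ), w ^ (z - 1) * (y + ν * w)⁻¹ := by
        congr 1
        refine setIntegral_congr_fun measurableSet_Ioi fun w (hw : 1 < w) => ?_
        have hyw : 0 < y + ν * w := by have := one_pos.trans hw; positivity
        have merge (t : ℝ) : exp (-y * t) * (w ^ (z - 1) * exp (-(ν * t * w)))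
            = w ^ (z - 1) * exp (-(y + ν * w) * t) := by
          rw [mul_left_comm, ← exp_add]; ring_nf
        simp_rw [merge]
        rw [integral_const_mul, integral_exp_neg_mul_Ioi_zero hyw]

end I1

section Substitution

variable {α D : ℝ}

theorem image_mul_rpow_neg_Ioo (hα : 0 < α) (hD : 0 < D) :
    (fun x => D ^ α * x ^ (-α)) '' Ioo 0 D = Ioi 1 := by
  have hDα : 0 < D ^ α := rpow_pos_of_pos hD α
  ext w
  constructor
  · rintro ⟨x, ⟨hx0, hxD⟩, rfl⟩
    have h := mul_lt_mul_of_pos_left (rpow_lt_rpow_of_neg hx0 hxD (neg_neg_of_pos hα)) hDα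
    rwa [← rpow_add hD, add_neg_cancel, rpow_zero] at h
  · intro (hw : 1 < w)
    have hw0 : 0 < w := one_pos.trans hw
    refine ⟨D * w ^ (-α⁻¹), ⟨by positivity, ?_⟩, ?_⟩
    · exact mul_lt_of_lt_one_right hD (rpow_lt_one_of_one_lt_of_neg hw (by simpa using hα))
    · show D ^ α * (D * w ^ (-α⁻¹)) ^ (-α) = w
      rw [mul_rpow hD.le (by positivity), ← rpow_mul hw0.le, ← mul_assoc, ← rpow_add hD,
        add_neg_cancel, rpow_zero, one_mul, neg_mul_neg, inv_mul_cancel₀ hα.ne', rpow_one]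

theorem integral_Ioi_one_rpow_mul_comp_div (hα : 0 < α) (hD : 0 < D) (f : ℝ → ℝ) :
    ∫ w in Ioi (1 : ℝ), w ^ (-(2 / α) - 1) * f (w / D ^ α)
      = α / D ^ 2 * ∫ x in Ioo 0 D, x * f (x ^ (-α)) := by
  have hDα : 0 < D ^ α := rpow_pos_of_pos hD α
  have hderiv : ∀ x ∈ Ioo 0 D, HasDerivWithinAt (fun x => D ^ α * x ^ (-α))
      (D ^ α * (-α * x ^ (-α - 1))) (Ioo 0 D) x := fun x hx =>
    ((hasDerivAt_rpow_const (Or.inl hx.1.ne')).const_mul _).hasDerivWithinAt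
  have hanti : StrictAntiOn (fun x => D ^ α * x ^ (-α)) (Ioo 0 D) := fun a ha b _ hab =>
    mul_lt_mul_of_pos_left (rpow_lt_rpow_of_neg ha.1 hab (neg_neg_of_pos hα)) hDα
  rw [← image_mul_rpow_neg_Ioo hα hD,
    integral_image_eq_integral_abs_deriv_smul measurableSet_Ioo hderiv hanti.injOn,
    ← integral_const_mul]
  refine setIntegral_congr_fun measurableSet_Ioo fun x ⟨hx0, _⟩ => ?_
  have hxα : 0 < x ^ (-α) := rpow_pos_of_pos hx0 _
  have hD2 : D ^ α * D ^ (α * (-(2 / α) - 1)) = (D ^ 2)⁻¹ := by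
    rw [← rpow_add hD, show α + α * (-(2 / α) - 1) = -(2 : ℕ) by field_simp; ring,
      rpow_neg hD.le, rpow_natCast]
  have hx : x ^ (-α - 1) * x ^ (-α * (-(2 / α) - 1)) = x := by
    rw [← rpow_add hx0, show -α - 1 + -α * (-(2 / α) - 1) = 1 by field_simp; ring, rpow_one]
  rw [smul_eq_mul, mul_div_cancel_left₀ _ hDα.ne', mul_rpow hDα.le hxα.le, ← rpow_mul hD.le,
    ← rpow_mul hx0.le, abs_of_neg (mul_neg_of_pos_of_neg hDα
      (mul_neg_of_neg_of_pos (neg_neg_of_pos hα) (rpow_pos_of_pos hx0 _)))]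
  calc -(D ^ α * (-α * x ^ (-α - 1)))
        * (D ^ (α * (-(2 / α) - 1)) * x ^ (-α * (-(2 / α) - 1)) * f (x ^ (-α)))
      = α * (D ^ α * D ^ (α * (-(2 / α) - 1)))
        * (x ^ (-α - 1) * x ^ (-α * (-(2 / α) - 1))) * f (x ^ (-α)) := by ring
    _ = α / D ^ 2 * (x * f (x ^ (-α))) := by rw [hD2, hx]; ring

end Substitution

section SinglePower

variable {α s D P : ℝ}

theorem two_mul_integral_Ioo_eq_I1 {y : ℝ} (hα : 0 < α) (hs : 0 < s) (hD : 0 < D) (hy : 0 < y) :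
    2 * ∫ x in Ioo 0 D, x * (y + s * x ^ (-α))⁻¹
      = s ^ (2 / α) * (2 / α) * I1 (2 / α + 1) y (-(2 / α)) (s / D ^ α) := by
  have hν : 0 < s / D ^ α := by positivity
  have hscale (w : ℝ) : s / D ^ α * w = s * (w / D ^ α) := by ring
  have hpow : (s / D ^ α) ^ (-(2 / α)) = (s ^ (2 / α))⁻¹ * D ^ 2 := by
    rw [div_rpow hs.le (by positivity), ← rpow_mul hD.le, rpow_neg hs.le,
      show α * -(2 / α) = -(2 : ℕ) by push_cast; field_simp, rpow_neg hD.le, rpow_natCast,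
      div_inv_eq_mul]
  rw [I1_eq_rpow_mul_integral (by ring) hy hν (neg_neg_of_pos (by positivity))]
  simp_rw [hscale]
  rw [integral_Ioi_one_rpow_mul_comp_div hα hD (fun u => (y + s * u)⁻¹), hpow]
  have : 0 < s ^ (2 / α) := by positivity
  field_simp

theorem mul_sub_inv_add_rpow_neg_eq {x : ℝ} (hx : 0 < x) (hs : 0 ≤ s) (hP : 0 < P) :
    x * (P - (P⁻¹ + s * x ^ (-α))⁻¹) = s * P ^ 2 * (x ^ (1 : ℝ) / (s * P + x ^ α)) := by
  have hxα : 0 < x ^ α := rpow_pos_of_pos hx α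
  rw [rpow_neg hx.le, rpow_one]
  field_simp
  ring

theorem integrableOn_mul_sub_inv_add_rpow_neg (hα : 2 < α) (hs : 0 < s) (hP : 0 < P) :
    IntegrableOn (fun x => x * (P - (P⁻¹ + s * x ^ (-α))⁻¹)) (Ioi 0) :=
  IntegrableOn.congr_fun
    ((integrableOn_rpow_div_add_rpow (by norm_num) (by linarith) (by positivity)).const_mul _)
    (fun x (hx : 0 < x) => (mul_sub_inv_add_rpow_neg_eq hx hs.le hP).symm) measurableSet_Ioi

theorem integral_mul_sub_inv_add_rpow_neg (hα : 2 < α) (hs : 0 < s) (hP : 0 < P) :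
    ∫ x in Ioi (0 : ℝ), x * (P - (P⁻¹ + s * x ^ (-α))⁻¹)
      = s ^ (2 / α) / α * (π * (sin (2 * π / α))⁻¹ * P ^ (2 / α + 1)) := by
  rw [setIntegral_congr_fun measurableSet_Ioi
      fun x (hx : 0 < x) => mul_sub_inv_add_rpow_neg_eq hx hs.le hP,
    integral_const_mul, integral_rpow_div_add_rpow (by norm_num) (by linarith) (by positivity),
    one_add_one_eq_two, show π * (2 / α) = 2 * π / α by ring, rpow_sub_one (by positivity),
    mul_rpow hs.le hP.le, rpow_add_one hP.ne']
  have hangle : 2 * π / α < π := by rw [div_lt_iff₀ (by linarith)]; nlinarith [pi_pos]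
  have := (sin_pos_of_pos_of_lt_pi (by positivity) hangle).ne'
  field_simp

theorem integral_exp_neg_div_mul_interferenceExponent (hα : 2 < α) (hs : 0 < s) (hD : 0 < D)
    (hP : 0 < P) :
    ∫ g in Ioi (0 : ℝ), exp (-(g / P)) * interferenceExponent α s D g
      = -D ^ 2 * P + s ^ (2 / α) * (2 / α) *
        (π * (sin (2 * π / α))⁻¹ * P ^ (2 / α + 1)
          + I1 (2 / α + 1) (1 / P) (-(2 / α)) (s / D ^ α)) := by
  set G := fun x => x * (P - (P⁻¹ + s * x ^ (-α))⁻¹)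
  have hG : IntegrableOn G (Ioi 0) := integrableOn_mul_sub_inv_add_rpow_neg hα hs hP
  have hG' : IntervalIntegrable G volume 0 D :=
    (intervalIntegrable_iff_integrableOn_Ioc_of_le hD.le).mpr (hG.mono_set Ioc_subset_Ioi_self)
  have hnear : ∫ x in Ioo 0 D, x * (P⁻¹ + s * x ^ (-α))⁻¹
      = P * (D ^ 2 / 2) - ∫ x in 0..D, G x := by
    rw [← integral_Ioc_eq_integral_Ioo, ← intervalIntegral.integral_of_le hD.le]
    calc ∫ x in 0..D, x * (P⁻¹ + s * x ^ (-α))⁻¹ = ∫ x in 0..D, (P * x - G x) :=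
          intervalIntegral.integral_congr fun x _ => by simp only [G]; ring
      _ = P * (D ^ 2 / 2) - ∫ x in 0..D, G x := by
          rw [intervalIntegral.integral_sub
              (intervalIntegral.intervalIntegrable_id.const_mul P) hG',
            intervalIntegral.integral_const_mul, integral_id]
          ring
  have hfar : ∫ x in Ioi D, G x = (∫ x in Ioi 0, G x) - ∫ x in 0..D, G x := by
    rw [← intervalIntegral.integral_Ioi_sub_Ioi hG hD.le, sub_sub_cancel]
  rw [integral_exp_neg_div_mul_interferenceExponent_eq_integral hα hs.le hD hP, hfar,
    integral_mul_sub_inv_add_rpow_neg hα hs hP, one_div P]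
  linear_combination
    two_mul_integral_Ioo_eq_I1 (by linarith : 0 < α) hs hD (inv_pos.mpr hP) - 2 * hnear

end SinglePower

/-- Laplace-transform exponent of the FD-cell interference, unequal powers. -/
theorem laplace_exponent_FD_unequal_powers (α s D Pu Pb : ℝ) (hα : 2 < α) (hs : 0 < s)
    (hD : 0 < D) (hPu : 0 < Pu) (hPb : 0 < Pb) (hne : Pu ≠ Pb) :
    (1 / (Pu - Pb)) * ∫ g in Set.Ioi (0 : ℝ),
        (Real.exp (-(g / Pu)) - Real.exp (-(g / Pb))) *
        (2 * ∫ x in Set.Ioi D, x * (1 - Real.exp (-(s * g * x ^ (-α)))))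
      = -D ^ 2 + s ^ (2 / α) * (2 / (α * (Pu - Pb))) *
        (Real.pi * (Real.sin (2 * Real.pi / α))⁻¹ * (Pu ^ (2 / α + 1) - Pb ^ (2 / α + 1))
          + I1 (2 / α + 1) (1 / Pu) (-(2 / α)) (s / D ^ α)
          - I1 (2 / α + 1) (1 / Pb) (-(2 / α)) (s / D ^ α)) := by
  change (1 / (Pu - Pb)) * ∫ g in Ioi (0 : ℝ),
      (exp (-(g / Pu)) - exp (-(g / Pb))) * interferenceExponent α s D g = _
  simp_rw [sub_mul]
  rw [integral_sub (integrableOn_exp_neg_div_mul_interferenceExponent hα hs.le hD hPu)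
      (integrableOn_exp_neg_div_mul_interferenceExponent hα hs.le hD hPb),
    integral_exp_neg_div_mul_interferenceExponent hα hs hD hPu,
    integral_exp_neg_div_mul_interferenceExponent hα hs hD hPb]
  field_simp [sub_ne_zero.mpr hne]
  ring
end

section
/- Let x > 0, y > 0, ν > 0 and z ∈ ℝ with x + z > 0. Then the function t ↦ t^{x−1} e^{−y t} Γ(z, ν t) is Lebesgue integrable on (0, ∞), where Γ(a,u) := ∫_u^∞ s^{a−1} e^{−s} ds is the real upper incomplete gamma function. (This establishes that the quantity I₁(x, y, z, ν) = ∫₀^∞ t^{x−1} e^{−y t} Γ(z, ν t) dt is well defined.) -/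
open MeasureTheory Real

/-!
For `w ≤ 0` and `s ≥ u > 0` we have `s ^ (a - 1) ≤ u ^ w * s ^ (a - w - 1)`, hence
`Γ(a, u) ≤ u ^ w * Γ(a - w)` as soon as `w < a`. Taking `w ≤ 0` with `w < z` and `0 < x + w`,
the integrand is dominated by `Γ(z - w) ν ^ w t ^ (x + w - 1) e ^ (-y t)`, which is integrable on
`(0, ∞)`; measurability comes from the monotonicity of `Γ(z, ·)`.
-/

open Set

section
variable {a u : ℝ}

lemma rpow_mul_exp_neg_le_of_nonpos {w s : ℝ} (hw : w ≤ 0) (hu : 0 < u) (hs : u ≤ s) :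
    s ^ (a - 1) * exp (-s) ≤ u ^ w * (exp (-s) * s ^ (a - w - 1)) := by
  have hs0 : 0 < s := hu.trans_le hs
  calc s ^ (a - 1) * exp (-s) = s ^ w * (exp (-s) * s ^ (a - w - 1)) := by
        rw [show a - 1 = w + (a - w - 1) by ring, rpow_add hs0]; ring
    _ ≤ u ^ w * (exp (-s) * s ^ (a - w - 1)) := by
        gcongr ?_ * _
        exact rpow_le_rpow_of_nonpos hu hs hw

lemma integrableOn_uGamma_integrand (a : ℝ) (hu : 0 < u) :
    IntegrableOn (fun t : ℝ => t ^ (a - 1) * exp (-t)) (Ioi u) := by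
  have hdom : IntegrableOn
      (fun s : ℝ => u ^ min 0 (a - 1) * (exp (-s) * s ^ (a - min 0 (a - 1) - 1))) (Ioi u) :=
    ((GammaIntegral_convergent (by simp)).mono_set (Ioi_subset_Ioi hu.le)).const_mul _
  have hcont : ContinuousOn (fun t : ℝ => t ^ (a - 1) * exp (-t)) (Ioi 0) := by
    fun_prop (disch := exact fun t ht => ne_of_gt ht)
  refine hdom.mono' ((hcont.mono (Ioi_subset_Ioi hu.le)).aestronglyMeasurable measurableSet_Ioi) ?_
  filter_upwards [ae_restrict_mem measurableSet_Ioi] with s hs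
  have hs0 : 0 < s := hu.trans hs
  rw [norm_of_nonneg (by positivity)]
  exact rpow_mul_exp_neg_le_of_nonpos (min_le_left _ _) hu hs.le

lemma uGamma_nonneg (a : ℝ) (hu : 0 ≤ u) : 0 ≤ uGamma a u :=
  setIntegral_nonneg measurableSet_Ioi fun _ hs =>
    mul_nonneg (rpow_nonneg (hu.trans hs.le) _) (exp_pos _).le

lemma uGamma_antitoneOn (a : ℝ) : AntitoneOn (uGamma a) (Ioi 0) := by
  intro u hu v _ huv
  refine setIntegral_mono_set (integrableOn_uGamma_integrand a hu) ?_
    (Ioi_subset_Ioi huv).eventuallyLE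
  filter_upwards [ae_restrict_mem measurableSet_Ioi] with s hs
  exact mul_nonneg (rpow_nonneg (hu.trans hs).le _) (exp_pos _).le

lemma uGamma_le_rpow_mul_Gamma {w : ℝ} (hw : w ≤ 0) (hwa : w < a) (hu : 0 < u) :
    uGamma a u ≤ u ^ w * Gamma (a - w) := by
  have hGamma : IntegrableOn (fun s : ℝ => exp (-s) * s ^ (a - w - 1)) (Ioi 0) :=
    GammaIntegral_convergent (by linarith)
  rw [Gamma_eq_integral (by linarith), ← integral_const_mul]
  calc uGamma a u ≤ ∫ s in Ioi u, u ^ w * (exp (-s) * s ^ (a - w - 1)) :=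
        setIntegral_mono_on (integrableOn_uGamma_integrand a hu)
          ((hGamma.mono_set (Ioi_subset_Ioi hu.le)).const_mul _) measurableSet_Ioi
          fun s hs => rpow_mul_exp_neg_le_of_nonpos hw hu (le_of_lt hs)
    _ ≤ ∫ s in Ioi 0, u ^ w * (exp (-s) * s ^ (a - w - 1)) := by
        refine setIntegral_mono_set (hGamma.const_mul _) ?_ (Ioi_subset_Ioi hu.le).eventuallyLE
        filter_upwards [ae_restrict_mem measurableSet_Ioi] with s (hs : 0 < s)
        positivity

end

lemma integrableOn_rpow_mul_exp_neg_mul {c b : ℝ} (hc : -1 < c) (hb : 0 < b) :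
    IntegrableOn (fun t : ℝ => t ^ c * exp (-(b * t))) (Ioi 0) := by
  simpa only [rpow_one, neg_mul] using integrableOn_rpow_mul_exp_neg_mul_rpow hc one_pos hb

/-- the integrand of I₁(x,y,z,ν) is Lebesgue integrable on (0,∞). -/
theorem integrable_I1_integrand (x y z ν : ℝ) (hx : 0 < x) (hy : 0 < y) (hν : 0 < ν)
    (hxz : 0 < x + z) :
    MeasureTheory.IntegrableOn
      (fun t => t ^ (x - 1) * Real.exp (-(y * t)) * uGamma z (ν * t))
      (Set.Ioi (0 : ℝ)) := by
  obtain ⟨w, hw, hwz, hxw⟩ : ∃ w : ℝ, w ≤ 0 ∧ w < z ∧ 0 < x + w :=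
    ⟨min 0 ((z - x) / 2), min_le_left _ _, (min_le_right _ _).trans_lt (by linarith),
      by rcases min_cases (0 : ℝ) ((z - x) / 2) with h | h <;> linarith [h.1]⟩
  have hmeas : AEStronglyMeasurable (fun t => t ^ (x - 1) * exp (-(y * t)) * uGamma z (ν * t))
      (volume.restrict (Ioi 0)) := by
    have hcont : ContinuousOn (fun t : ℝ => t ^ (x - 1) * exp (-(y * t))) (Ioi 0) := by
      fun_prop (disch := exact fun t ht => ne_of_gt ht)
    have hanti : AntitoneOn (fun t => uGamma z (ν * t)) (Ioi 0) := fun s hs t ht hst =>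
      uGamma_antitoneOn z (mul_pos hν hs) (mul_pos hν ht) (by gcongr)
    exact (hcont.aestronglyMeasurable measurableSet_Ioi).mul
      (aemeasurable_restrict_of_antitoneOn measurableSet_Ioi hanti).aestronglyMeasurable
  refine ((integrableOn_rpow_mul_exp_neg_mul (c := x + w - 1) (by linarith) hy).const_mul
    (Gamma (z - w) * ν ^ w)).mono' hmeas ?_
  filter_upwards [ae_restrict_mem measurableSet_Ioi] with t (ht : 0 < t)
  have hνt := mul_pos hν ht
  rw [norm_of_nonneg (by have := uGamma_nonneg z hνt.le; positivity)]
  calc t ^ (x - 1) * exp (-(y * t)) * uGamma z (ν * t)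
      ≤ t ^ (x - 1) * exp (-(y * t)) * ((ν * t) ^ w * Gamma (z - w)) := by
        gcongr; exact uGamma_le_rpow_mul_Gamma hw hwz hνt
    _ = Gamma (z - w) * ν ^ w * (t ^ (x + w - 1) * exp (-(y * t))) := by
        rw [mul_rpow hν.le ht.le, show x + w - 1 = (x - 1) + w by ring, rpow_add ht]; ring
end
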